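/- Let n and a be integers with n/4 + 2 ≤ a ≤ n/2, and let G = (K_{a−2} ∪ K_{n−a}) ∨ K_2 be the join of the disjoint union of complete graphs K_{a−2} and K_{n−a} with K_2, a graph on n vertices. Then G is 2-connected, σ₂(G) = n, ᾱ(G) = min{2a − 3, n − a + 1}, and σ₂(G) ≤ 2·ᾱ(G) − 2. -/

import Mathlib

namespace SimpleGraph

variable {V : Type*}

/-- `G` has an `(s,t)`-bipartite-hole. -/
def HasBipHole (G : SimpleGraph V) (s t : ℕ) : Prop :=
  ∃ S T : Finset V, Disjoint S T ∧ S.card = s ∧ T.card = t ∧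
    ∀ a ∈ S, ∀ b ∈ T, ¬ G.Adj a b

/-- The bipartite-hole-number `ᾱ(G)`. -/
noncomputable def bipHoleNum (G : SimpleGraph V) : ℕ :=
  sInf {k | 0 < k ∧ ∃ s t : ℕ, 0 < s ∧ 0 < t ∧ s + t = k + 1 ∧ ¬ G.HasBipHole s t}

/-- `σ₂(G)`: the minimum of `d(x) + d(y)` over pairs of distinct nonadjacent vertices. -/
noncomputable def sigmaTwo (G : SimpleGraph V) : ℕ :=
  sInf {m | ∃ x y : V, x ≠ y ∧ ¬ G.Adj x y ∧
    m = (G.neighborSet x).ncard + (G.neighborSet y).ncard}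

/-- The join `G ∨ H` of two graphs: their disjoint union together with all edges between
the two parts. -/
def graphJoin {α β : Type*} (G : SimpleGraph α) (H : SimpleGraph β) :
    SimpleGraph (α ⊕ β) where
  Adj x y :=
    match x, y with
    | Sum.inl a, Sum.inl b => G.Adj a b
    | Sum.inr a, Sum.inr b => H.Adj a b
    | Sum.inl _, Sum.inr _ => True
    | Sum.inr _, Sum.inl _ => True
  symm := ⟨by rintro (a | a) (b | b) h <;> first | exact h.symm | trivial⟩
  loopless := ⟨by rintro (a | a) h <;> [exact G.irrefl h; exact H.irrefl h]⟩

end SimpleGraph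

/-!
The two vertices of the `K₂` are adjacent to every other vertex, so after deleting any one
vertex the other one is still universal: `G` is 2-connected. The only nonadjacent pairs consist
of one vertex of each clique, with degree sum `(a - 3 + 2) + (n - a - 1 + 2) = n`. A bipartite
hole with both sides nonempty cannot use a vertex of the join's `K₂`, nor vertices on both sides
of the join, and in `K_p ∪ K_q` it must put one side in each clique; so for `p ≤ q` an
`(s, t)`-hole exists iff `{s, t}` fits into `(p, q)`, and the least `s + t - 1` without a hole
is `min (2p + 1) (q + 1)`.
-/

theorem Finset.card_le_card_of_subset_range {γ δ : Type*} [Fintype γ] (f : γ → δ) {u : Finset δ}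
    (h : ↑u ⊆ Set.range f) : u.card ≤ Fintype.card γ :=
  (Finset.card_le_card_of_surjOn f (by simpa [Set.SurjOn] using h)).trans_eq Finset.card_univ

namespace SimpleGraph

variable {V W α β γ : Type*}

section BipHole

variable {G : SimpleGraph V} {H : SimpleGraph W} {s t : ℕ}

theorem HasBipHole.symm (h : G.HasBipHole s t) : G.HasBipHole t s := by
  obtain ⟨S, T, hST, hS, hT, hno⟩ := h
  exact ⟨T, S, hST.symm, hT, hS, fun b hb a ha hab => hno a ha b hb hab.symm⟩

theorem not_hasBipHole_top (hs : 0 < s) (ht : 0 < t) :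
    ¬ (⊤ : SimpleGraph V).HasBipHole s t := by
  rintro ⟨S, T, hST, rfl, rfl, hno⟩
  obtain ⟨x, hx⟩ := Finset.card_pos.mp hs
  obtain ⟨y, hy⟩ := Finset.card_pos.mp ht
  exact hno x hx y hy ((top_adj x y).mpr (Finset.disjoint_left.mp hST hx <| · ▸ hy))

theorem HasBipHole.map (f : G ↪g H) (h : G.HasBipHole s t) : H.HasBipHole s t := by
  obtain ⟨S, T, hST, rfl, rfl, hno⟩ := h
  refine ⟨S.map f.toEmbedding, T.map f.toEmbedding, (Finset.disjoint_map _).mpr hST,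
    Finset.card_map _, Finset.card_map _, ?_⟩
  simp only [Finset.mem_map]
  rintro _ ⟨a, ha, rfl⟩ _ ⟨b, hb, rfl⟩ hab
  exact hno a ha b hb (f.map_adj_iff.mp hab)

theorem hasBipHole_of_subset_range (f : G ↪g H) {S T : Finset W} (hST : Disjoint S T)
    (hno : ∀ a ∈ S, ∀ b ∈ T, ¬ H.Adj a b) (hS : ↑S ⊆ Set.range f) (hT : ↑T ⊆ Set.range f) :
    G.HasBipHole S.card T.card := by
  classical
  refine ⟨S.preimage f f.injective.injOn, T.preimage f f.injective.injOn,
    Finset.disjoint_preimage hST, ?_, ?_, fun a ha b hb hab =>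
      hno _ (Finset.mem_preimage.mp ha) _ (Finset.mem_preimage.mp hb) (f.map_adj_iff.mpr hab)⟩
  · rw [Finset.card_preimage, Finset.filter_true_of_mem fun x hx => hS hx]
  · rw [Finset.card_preimage, Finset.filter_true_of_mem fun x hx => hT hx]

end BipHole

section Join

variable {G : SimpleGraph α} {H : SimpleGraph β} {s t : ℕ}

def Embedding.joinInl : G ↪g graphJoin G H := ⟨Function.Embedding.inl, Iff.rfl⟩

def Embedding.joinInr : H ↪g graphJoin G H := ⟨Function.Embedding.inr, Iff.rfl⟩

@[simp]
theorem Embedding.coe_joinInl : ⇑(Embedding.joinInl : G ↪g graphJoin G H) = Sum.inl := rfl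

@[simp]
theorem Embedding.coe_joinInr : ⇑(Embedding.joinInr : H ↪g graphJoin G H) = Sum.inr := rfl

theorem hasBipHole_graphJoin_iff (hs : 0 < s) (ht : 0 < t) :
    (graphJoin G H).HasBipHole s t ↔ G.HasBipHole s t ∨ H.HasBipHole s t := by
  refine ⟨?_, fun h => h.elim (·.map Embedding.joinInl) (·.map Embedding.joinInr)⟩
  rintro ⟨S, T, hST, rfl, rfl, hno⟩
  have hside : ∀ x ∈ S, ∀ y ∈ T, x.isLeft = y.isLeft := by
    rintro (a | a) hx (b | b) hy <;> first | rfl | exact absurd trivial (hno _ hx _ hy)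
  obtain ⟨x₀, hx₀⟩ := Finset.card_pos.mp hs
  obtain ⟨y₀, hy₀⟩ := Finset.card_pos.mp ht
  have hS : ↑S ⊆ {x : α ⊕ β | x.isLeft = y₀.isLeft} := fun x hx => hside x hx y₀ hy₀
  have hT : ↑T ⊆ {y : α ⊕ β | y.isLeft = y₀.isLeft} := fun y hy =>
    (hside x₀ hx₀ y hy).symm.trans (hS hx₀)
  cases y₀ with
  | inl =>
    exact .inl <| hasBipHole_of_subset_range Embedding.joinInl hST hno
      (by simpa [Set.range_inl] using hS)
      (by simpa [Set.range_inl] using hT)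
  | inr =>
    exact .inr <| hasBipHole_of_subset_range Embedding.joinInr hST hno
      (by simpa [Set.range_inr] using hS)
      (by simpa [Set.range_inr] using hT)

end Join

section CompleteSum

variable {s t : ℕ}

theorem hasBipHole_sum_of_le [Fintype α] [Fintype β] (G : SimpleGraph α) (H : SimpleGraph β)
    (hs : s ≤ Fintype.card α) (ht : t ≤ Fintype.card β) : (G ⊕g H).HasBipHole s t := by
  obtain ⟨A, -, rfl⟩ := Finset.exists_subset_card_eq (s := (Finset.univ : Finset α)) (by simpa)
  obtain ⟨B, -, rfl⟩ := Finset.exists_subset_card_eq (s := (Finset.univ : Finset β)) (by simpa)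
  exact ⟨A.map .inl, B.map .inr, Finset.disjoint_map_inl_map_inr _ _, Finset.card_map _,
    Finset.card_map _, by simp⟩

theorem top_sum_top_adj {x y : α ⊕ β} :
    ((⊤ : SimpleGraph α) ⊕g (⊤ : SimpleGraph β)).Adj x y ↔ x ≠ y ∧ x.isLeft = y.isLeft := by
  cases x <;> cases y <;> simp

theorem hasBipHole_top_sum_top_iff [Fintype α] [Fintype β] (hs : 0 < s) (ht : 0 < t) :
    ((⊤ : SimpleGraph α) ⊕g (⊤ : SimpleGraph β)).HasBipHole s t ↔
      s ≤ Fintype.card α ∧ t ≤ Fintype.card β ∨ t ≤ Fintype.card α ∧ s ≤ Fintype.card β := by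
  refine ⟨?_, fun h => h.elim (fun h => hasBipHole_sum_of_le _ _ h.1 h.2)
    (fun h => (hasBipHole_sum_of_le _ _ h.1 h.2).symm)⟩
  rintro ⟨S, T, hST, rfl, rfl, hno⟩
  have hside : ∀ x ∈ S, ∀ y ∈ T, x.isLeft ≠ y.isLeft := fun x hx y hy hxy =>
    hno x hx y hy (top_sum_top_adj.mpr ⟨fun h => Finset.disjoint_left.mp hST hx (h ▸ hy), hxy⟩)
  obtain ⟨x₀, hx₀⟩ := Finset.card_pos.mp hs
  obtain ⟨y₀, hy₀⟩ := Finset.card_pos.mp ht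
  have hS : ↑S ⊆ {x : α ⊕ β | x.isLeft ≠ y₀.isLeft} := fun x hx => hside x hx y₀ hy₀
  have hT : ↑T ⊆ {y : α ⊕ β | y.isLeft ≠ x₀.isLeft} := fun y hy => (hside x₀ hx₀ y hy).symm
  rcases x₀ with a | a <;> rcases y₀ with b | b
  · exact (hside _ hx₀ _ hy₀ rfl).elim
  · exact .inl ⟨Finset.card_le_card_of_subset_range Sum.inl (by simpa [Set.range_inl] using hS),
      Finset.card_le_card_of_subset_range Sum.inr (by simpa [Set.range_inr] using hT)⟩
  · exact .inr ⟨Finset.card_le_card_of_subset_range Sum.inl (by simpa [Set.range_inl] using hT),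
      Finset.card_le_card_of_subset_range Sum.inr (by simpa [Set.range_inr] using hS)⟩
  · exact (hside _ hx₀ _ hy₀ rfl).elim

end CompleteSum

theorem bipHoleNum_eq_of_hasBipHole_iff {G : SimpleGraph V} {p q : ℕ} (hpq : p ≤ q)
    (h : ∀ s t, 0 < s → 0 < t → (G.HasBipHole s t ↔ s ≤ p ∧ t ≤ q ∨ t ≤ p ∧ s ≤ q)) :
    G.bipHoleNum = min (2 * p + 1) (q + 1) := by
  have hmem : min (2 * p + 1) (q + 1) ∈
      {k | 0 < k ∧ ∃ s t : ℕ, 0 < s ∧ 0 < t ∧ s + t = k + 1 ∧ ¬ G.HasBipHole s t} := by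
    refine ⟨by omega, ?_⟩
    rcases le_total (2 * p + 1) (q + 1) with hle | hle
    · refine ⟨p + 1, p + 1, by omega, by omega, by omega, ?_⟩
      rw [h _ _ (by omega) (by omega)]
      omega
    · refine ⟨q + 1, 1, by omega, by omega, by omega, ?_⟩
      rw [h _ _ (by omega) (by omega)]
      omega
  refine le_antisymm (Nat.sInf_le hmem) (le_csInf ⟨_, hmem⟩ ?_)
  rintro k ⟨-, s, t, hs, ht, hst, hno⟩
  rw [h s t hs ht] at hno
  omega

theorem bipHoleNum_graphJoin_top_sum_top [Fintype α] [Fintype β]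
    (hαβ : Fintype.card α ≤ Fintype.card β) :
    (graphJoin ((⊤ : SimpleGraph α) ⊕g (⊤ : SimpleGraph β)) (⊤ : SimpleGraph γ)).bipHoleNum =
      min (2 * Fintype.card α + 1) (Fintype.card β + 1) :=
  bipHoleNum_eq_of_hasBipHole_iff hαβ fun _ _ hs ht => by
    rw [hasBipHole_graphJoin_iff hs ht, hasBipHole_top_sum_top_iff hs ht,
      or_iff_left (not_hasBipHole_top hs ht)]

theorem sigmaTwo_eq_of_forall {G : SimpleGraph V} {m : ℕ} (hex : ∃ x y, x ≠ y ∧ ¬ G.Adj x y)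
    (h : ∀ x y, x ≠ y → ¬ G.Adj x y →
      (G.neighborSet x).ncard + (G.neighborSet y).ncard = m) :
    G.sigmaTwo = m := by
  obtain ⟨x, y, hxy, hn⟩ := hex
  have hset : {m' | ∃ x y, x ≠ y ∧ ¬ G.Adj x y ∧
      m' = (G.neighborSet x).ncard + (G.neighborSet y).ncard} = {m} :=
    Set.eq_singleton_iff_unique_mem.mpr ⟨⟨x, y, hxy, hn, (h x y hxy hn).symm⟩,
      fun _ ⟨x, y, hxy, hn, he⟩ => he.trans (h x y hxy hn)⟩
  rw [sigmaTwo, hset, csInf_singleton]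

theorem ncard_neighborSet_top [Fintype V] (v : V) :
    ((⊤ : SimpleGraph V).neighborSet v).ncard = Fintype.card V - 1 := by
  rw [neighborSet_top, Set.ncard_compl, Set.ncard_singleton, Nat.card_eq_fintype_card]

theorem neighborSet_graphJoin_inl (G : SimpleGraph α) (H : SimpleGraph β) (x : α) :
    (graphJoin G H).neighborSet (.inl x) = Sum.inl '' G.neighborSet x ∪ Set.range Sum.inr := by
  ext (y | y) <;> simp [graphJoin]

theorem ncard_neighborSet_graphJoin_inl [Fintype α] [Fintype β] (G : SimpleGraph α)
    (H : SimpleGraph β) (x : α) :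
    ((graphJoin G H).neighborSet (.inl x)).ncard = (G.neighborSet x).ncard + Fintype.card β := by
  rw [neighborSet_graphJoin_inl, Set.ncard_union_eq
      (Set.isCompl_range_inl_range_inr.disjoint.mono_left (Set.image_subset_range _ _)),
    Set.ncard_image_of_injective _ Sum.inl_injective, ← Set.image_univ,
    Set.ncard_image_of_injective _ Sum.inr_injective, Set.ncard_univ, Nat.card_eq_fintype_card]

theorem sigmaTwo_graphJoin_top_sum_top [Fintype α] [Fintype β] [Fintype γ] [Nonempty α]
    [Nonempty β] :
    (graphJoin ((⊤ : SimpleGraph α) ⊕g (⊤ : SimpleGraph β)) (⊤ : SimpleGraph γ)).sigmaTwo =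
      Fintype.card α - 1 + (Fintype.card β - 1) + 2 * Fintype.card γ := by
  set J := graphJoin ((⊤ : SimpleGraph α) ⊕g (⊤ : SimpleGraph β)) (⊤ : SimpleGraph γ)
  have hdeg_inl (a : α) :
      (J.neighborSet (.inl (.inl a))).ncard = Fintype.card α - 1 + Fintype.card γ := by
    rw [ncard_neighborSet_graphJoin_inl, neighborSet_sum_inl,
      Set.ncard_image_of_injective _ Sum.inl_injective, ncard_neighborSet_top]
  have hdeg_inr (b : β) :
      (J.neighborSet (.inl (.inr b))).ncard = Fintype.card β - 1 + Fintype.card γ := by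
    rw [ncard_neighborSet_graphJoin_inl, neighborSet_sum_inr,
      Set.ncard_image_of_injective _ Sum.inr_injective, ncard_neighborSet_top]
  obtain ⟨a⟩ := ‹Nonempty α›
  obtain ⟨b⟩ := ‹Nonempty β›
  refine sigmaTwo_eq_of_forall ⟨.inl (.inl a), .inl (.inr b), by simp, by simp [J, graphJoin]⟩ ?_
  rintro ((a | b) | c) ((a' | b') | c') hne hadj <;> simp_all [J, graphJoin] <;> omega

theorem isUniversal_graphJoin_top_inr (G : SimpleGraph α) (c : γ) :
    (graphJoin G (⊤ : SimpleGraph γ)).IsUniversal (.inr c) := by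
  rintro (x | d) hcd
  · trivial
  · exact (top_adj c d).mpr (Sum.inr_injective.ne_iff.mp hcd)

theorem connected_induce_compl_singleton_graphJoin_top [Nontrivial γ] (G : SimpleGraph α)
    (v : α ⊕ γ) : ((graphJoin G (⊤ : SimpleGraph γ)).induce {v}ᶜ).Connected := by
  obtain ⟨c, hc⟩ : ∃ c : γ, Sum.inr c ≠ v := by
    cases v with
    | inl x => exact ⟨Classical.arbitrary γ, Sum.inr_ne_inl⟩
    | inr d => exact (exists_ne d).imp fun c hc => Sum.inr_injective.ne hc
  exact Connected.of_isUniversal (v := ⟨.inr c, hc⟩) fun w hw =>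
    isUniversal_graphJoin_top_inr G c (Subtype.coe_injective.ne hw)

end SimpleGraph

open SimpleGraph in
/-- For `n/4 + 2 ≤ a ≤ n/2`, the graph `G = (K_{a-2} ∪ K_{n-a}) ∨ K_2`
on `n` vertices is 2-connected, has `σ₂(G) = n`, `ᾱ(G) = min (2a - 3) (n - a + 1)`, and
`σ₂(G) ≤ 2ᾱ(G) - 2`. -/
theorem stmt18 (n a : ℕ) (ha : n + 8 ≤ 4 * a) (ha' : 2 * a ≤ n)
    (G : SimpleGraph ((Fin (a - 2) ⊕ Fin (n - a)) ⊕ Fin 2))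
    (hG : G = graphJoin
      ((⊤ : SimpleGraph (Fin (a - 2))).sum (⊤ : SimpleGraph (Fin (n - a))))
      (⊤ : SimpleGraph (Fin 2))) :
    (3 ≤ Fintype.card ((Fin (a - 2) ⊕ Fin (n - a)) ⊕ Fin 2) ∧
      ∀ v, (G.induce ({v}ᶜ : Set ((Fin (a - 2) ⊕ Fin (n - a)) ⊕ Fin 2))).Connected) ∧
    G.sigmaTwo = n ∧
    G.bipHoleNum = min (2 * a - 3) (n - a + 1) ∧
    G.sigmaTwo ≤ 2 * G.bipHoleNum - 2 := by
  subst hG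
  have : NeZero (a - 2) := ⟨by omega⟩
  have : NeZero (n - a) := ⟨by omega⟩
  have hσ := sigmaTwo_graphJoin_top_sum_top (α := Fin (a - 2)) (β := Fin (n - a)) (γ := Fin 2)
  have hα := bipHoleNum_graphJoin_top_sum_top (α := Fin (a - 2)) (β := Fin (n - a))
    (γ := Fin 2) (by simp only [Fintype.card_fin]; omega)
  simp only [Fintype.card_fin] at hσ hα
  refine ⟨⟨by simp only [Fintype.card_sum, Fintype.card_fin]; omega,
    connected_induce_compl_singleton_graphJoin_top _⟩, ?_, ?_, ?_⟩ <;>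
    simp only [hσ, hα] <;> omega
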